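/- Let τ be a combinatorial type in 𝒞_q with des(τ) = d ≥ 2 and sym(τ) = s. Choose a representative cycle σ of τ whose signature ends in 1 (i.e., a_q = 1) and let 𝒪 be the unique realization of σ under m_d. Then the rotated copies 𝒪 − j/(d−1) (mod ℤ) for 0 ≤ j < (d−1)/s form all the realizations of τ under m_d, and each of these (d−1)/s orbits is invariant under the rigid rotation x ↦ x − 1/s (mod ℤ). -/

import Mathlib

open scoped Classical

noncomputable section

/-- The representative of `i : ZMod q` in `{1, …, q}`. -/
def rep (q : ℕ) [NeZero q] (i : ZMod q) : ℕ :=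
  if i = 0 then q else i.val

/-- The rotation `ρ : i ↦ i + 1 (mod q)` of `ZMod q`. -/
def rotPerm (q : ℕ) : Equiv.Perm (ZMod q) :=
  Equiv.addRight 1

/-- The descent number `des σ`: the number of `i ∈ ZMod q` with `σ(i) > σ(i+1)`,
values compared via their representatives in `{1, …, q}`. -/
def desNum (q : ℕ) [NeZero q] (σ : Equiv.Perm (ZMod q)) : ℕ :=
  (Finset.univ.filter fun i : ZMod q => rep q (σ (i + 1)) < rep q (σ i)).card

/-- `σ` is a `q`-cycle, i.e. it acts transitively on `ZMod q`. -/
def IsQCycle (q : ℕ) (σ : Equiv.Perm (ZMod q)) : Prop :=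
  ∀ i j : ZMod q, ∃ n : ℕ, (σ ^ n) i = j

/-- The transition matrix of `σ`: the `(i,j)` entry is `1` if `j` lies in the
cyclic interval `[σ(i), σ(i+1))` of `ZMod q` and `0` otherwise. -/
def transMatrix (q : ℕ) [NeZero q] (σ : Equiv.Perm (ZMod q)) :
    Matrix (ZMod q) (ZMod q) ℝ :=
  Matrix.of fun i j => if (j - σ i).val < (σ (i + 1) - σ i).val then (1 : ℝ) else 0

/-- A probability vector: non-negative components summing to `1`. -/
def IsProbVec (q : ℕ) [NeZero q] (v : ZMod q → ℝ) : Prop :=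
  (∀ i, 0 ≤ v i) ∧ ∑ i, v i = 1

/-- The symmetry order of `σ`: the order of the stabilizer of `σ` in the rotation
group `⟨ρ⟩` acting by conjugation. -/
def symOrder (q : ℕ) [NeZero q] (σ : Equiv.Perm (ZMod q)) : ℕ :=
  ((Finset.range q).filter fun j => rotPerm q ^ j * σ * (rotPerm q ^ j)⁻¹ = σ).card

/-- `F : ℝ → ℝ` is a lift of a degree `k` covering map of `ℝ/ℤ`:
a homeomorphism of `ℝ` with `F (t+1) = F t + k`. -/
def IsDegreeLift (k : ℕ) (F : ℝ → ℝ) : Prop :=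
  Continuous F ∧ StrictMono F ∧ ∀ t, F (t + 1) = F t + k

/-- The fixed point of the circle map corresponding to `u` (a point with
`F u - u ∈ ℤ`) is topologically repelling: `t ↦ F t - t` is strictly increasing
in a neighborhood of `u`. -/
def TopRepelling (F : ℝ → ℝ) (u : ℝ) : Prop :=
  ∃ ε > 0, StrictMonoOn (fun t => F t - t) (Set.Ioo (u - ε) (u + ε))

/-- `x : ZMod q → ℝ` is a period `q` orbit realizing `σ` for the circle map with
lift `F`: the points `x i` lie in `(0,1)` and are increasing with respect to the
representatives `{1, …, q}` (so that `0, x₁, …, x_q` are in positive cyclic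
order), and on the circle `f(x i) = x (σ i)` for all `i`. -/
def IsRealization (q : ℕ) [NeZero q] (σ : Equiv.Perm (ZMod q))
    (F : ℝ → ℝ) (x : ZMod q → ℝ) : Prop :=
  (∀ i, x i ∈ Set.Ioo (0 : ℝ) 1) ∧
  (∀ i j : ZMod q, rep q i < rep q j → x i < x j) ∧
  (∀ i, ∃ m : ℤ, F (x i) = x (σ i) + m)

/-- A realization of `σ` under the multiplication map `m_k : x ↦ kx (mod ℤ)`. -/
def MkRealization (q k : ℕ) [NeZero q] (σ : Equiv.Perm (ZMod q)) (x : ZMod q → ℝ) : Prop :=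
  IsRealization q σ (fun t => (k : ℝ) * t) x

/-- The upper endpoint (as a real number) of the partition interval
`I i = [x i, x (i+1)]`; for `i = 0 ≡ q` the interval wraps around `0 ∈ ℝ/ℤ`
and the endpoint is `x 1 + 1`. -/
def upperPt (q : ℕ) [NeZero q] (x : ZMod q → ℝ) (i : ZMod q) : ℝ :=
  if i = 0 then x 1 + 1 else x (i + 1)

/-- The `i`-th component of the fixed point distribution: the number of fixed
points of `m_k` (the points `j/(k-1) (mod ℤ)`) in the interior of the partition
interval `I i`. -/
def fixDist (q k : ℕ) [NeZero q] (x : ZMod q → ℝ) (i : ZMod q) : ℕ :=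
  ((Finset.Icc 1 (2 * (k - 1))).filter fun j : ℕ =>
    x i < (j : ℝ) / ((k : ℝ) - 1) ∧ (j : ℝ) / ((k : ℝ) - 1) < upperPt q x i).card

/-- The number of fixed points of `m_k` in the interval `(0, x 1)`. -/
def countFixBelow (q k : ℕ) [NeZero q] (x : ZMod q → ℝ) : ℕ :=
  ((Finset.range (k - 1)).filter fun j : ℕ =>
    0 < j ∧ (j : ℝ) / ((k : ℝ) - 1) < x 1).card

/-- The `m`-th component of the (cumulative) deployment vector: the number of
orbit points in `(0, m/(k-1))`. -/
def depCount (q k : ℕ) [NeZero q] (x : ZMod q → ℝ) (m : ℕ) : ℕ :=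
  (Finset.univ.filter fun j : ZMod q => x j < (m : ℝ) / ((k : ℝ) - 1)).card

/-- The rank of a marked index `i` among the marked indices `i₁ < ⋯ < i_{d-1}`
(ordered by their representatives in `{1, …, q}`). -/
def markRank (q : ℕ) [NeZero q] (σ : Equiv.Perm (ZMod q)) (i : ZMod q) : ℕ :=
  (Finset.univ.filter fun i' : ZMod q =>
    transMatrix q σ i' i' = 1 ∧ rep q i' ≤ rep q i).card

/-!
Lift a realization `x` of `σ` to the increasing sequence `X : ℤ → ℝ` with `X (k + q) = X k + 1`,
and `σ` to `Φ : ℤ → ℤ` with `X ∘ Φ = d * X`. As `des σ = d`, one period of `Φ` climbs by exactly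
`q d`, which forces every increment `Φ (k + 1) - Φ k` to be the least one compatible with `σ`.
So for a realization `y` of a rotated copy `ρʲ σ ρ⁻ʲ` the lifts of `σ` along `x` and `y` agree up
to a shift, and `Y (k + j) - X k` is a constant plus a bounded `B` with `B ∘ Φ = d * B`; hence
`B = 0` and `y` is `x` rotated by a fixed point `m/(d-1)` of `m_d`. Conversely, cutting the lifted
orbit at a fixed point `n/(d-1)` yields a realization of a rotated copy. The stabilizer of `σ` in
`ℛ_q` has order `s` and contains `ρ^(q/s)`; applied to it, the above shows that `𝒪` is invariant
under the rotation by `1/s`, so `𝒪 - n/(d-1)` only depends on `n` modulo `(d-1)/s`.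
-/

open Function Set

section Rep

variable {q : ℕ} [NeZero q]

lemma one_le_rep (i : ZMod q) : 1 ≤ rep q i := by
  unfold rep
  split_ifs with h
  · exact Nat.one_le_iff_ne_zero.2 (NeZero.ne q)
  · exact Nat.one_le_iff_ne_zero.2 (mt (ZMod.val_eq_zero i).1 h)

lemma rep_le (i : ZMod q) : rep q i ≤ q := by
  unfold rep
  split_ifs
  exacts [le_rfl, (ZMod.val_lt i).le]

@[simp]
lemma natCast_rep (i : ZMod q) : ((rep q i : ℕ) : ZMod q) = i := by
  unfold rep
  split_ifs with h
  · simp [h]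
  · exact ZMod.natCast_zmod_val i

lemma rep_natCast {n : ℕ} (h1 : 1 ≤ n) (hn : n ≤ q) : rep q n = n := by
  rcases hn.lt_or_eq with hlt | rfl
  · have : (n : ZMod q) ≠ 0 := by
      rw [Ne, ZMod.natCast_eq_zero_iff]
      exact Nat.not_dvd_of_pos_of_lt h1 hlt
    simp [rep, this, ZMod.val_cast_of_lt hlt]
  · simp [rep]

lemma rep_one : rep q 1 = 1 := by
  simpa using rep_natCast (q := q) le_rfl (Nat.one_le_iff_ne_zero.2 (NeZero.ne q))

lemma rep_add_one {i : ZMod q} (hi : i ≠ 0) : rep q (i + 1) = rep q i + 1 := by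
  have hlt : rep q i < q := by simpa [rep, hi] using ZMod.val_lt i
  simpa using rep_natCast (q := q) (n := rep q i + 1) (by omega) hlt

lemma val_sub_eq_rep_sub (a b : ZMod q) :
    ((a - b).val : ℤ) = rep q a - rep q b + if rep q a < rep q b then (q : ℤ) else 0 := by
  have hval : ((a - b).val : ℤ) = ((rep q a : ℤ) - rep q b) % q := by
    rw [← ZMod.val_intCast]
    simp
  have := one_le_rep a; have := rep_le a; have := one_le_rep b; have := rep_le b
  rw [hval]
  split_ifs with h
  · rw [← Int.add_emod_right, Int.emod_eq_of_lt] <;> omega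
  · rw [Int.emod_eq_of_lt] <;> omega

lemma sum_val_sub_eq_mul_desNum (σ : Equiv.Perm (ZMod q)) :
    ∑ i, ((σ (i + 1) - σ i).val : ℤ) = q * desNum q σ := by
  simp only [val_sub_eq_rep_sub, Finset.sum_add_distrib, Finset.sum_sub_distrib]
  rw [Fintype.sum_equiv (Equiv.addRight 1) (fun i => (rep q (σ (i + 1)) : ℤ))
      (fun i => (rep q (σ i) : ℤ)) (fun _ => rfl),
    sub_self, zero_add, desNum, Finset.card_filter, Nat.cast_sum, Finset.mul_sum]
  refine Finset.sum_congr rfl fun i _ => ?_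
  split_ifs <;> simp

lemma sum_range_natCast {M : Type*} [AddCommMonoid M] (f : ZMod q → M) :
    ∑ n ∈ Finset.range q, f n = ∑ i, f i :=
  Finset.sum_nbij' (↑) ZMod.val (by simp) (by simp [ZMod.val_lt])
    (fun n hn => ZMod.val_cast_of_lt (Finset.mem_range.1 hn)) (by simp) (by simp)

end Rep

section Rotation

variable {q : ℕ}

lemma rotPerm_pow_apply (j : ℕ) (i : ZMod q) : (rotPerm q ^ j) i = i + j := by
  induction j with
  | zero => simp
  | succ n ih =>
    rw [pow_succ', Equiv.Perm.mul_apply, ih]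
    simp [rotPerm, add_assoc]

lemma conj_rotPerm_pow_apply (σ : Equiv.Perm (ZMod q)) (j : ℕ) (i : ZMod q) :
    (rotPerm q ^ j * σ * (rotPerm q ^ j)⁻¹) i = σ (i - j) + j := by
  rw [Equiv.Perm.mul_apply, Equiv.Perm.mul_apply, Equiv.Perm.inv_eq_iff_eq.2
    (by rw [rotPerm_pow_apply, sub_add_cancel]), rotPerm_pow_apply]

lemma desNum_of_apply_eq [NeZero q] {σ τ : Equiv.Perm (ZMod q)} {a : ZMod q}
    (h : ∀ i, τ i = σ (i - a) + a) : desNum q τ = desNum q σ := by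
  have key : (q : ℤ) * desNum q τ = q * desNum q σ := by
    rw [← sum_val_sub_eq_mul_desNum, ← sum_val_sub_eq_mul_desNum]
    refine Fintype.sum_equiv (Equiv.subRight a) _ _ fun i => ?_
    simp [h, sub_add_eq_add_sub]
  exact_mod_cast mul_left_cancel₀ (by exact_mod_cast NeZero.ne q) key

def rotStabilizer (σ : Equiv.Perm (ZMod q)) : AddSubgroup (ZMod q) where
  carrier := {a | ∀ i, σ (i + a) = σ i + a}
  zero_mem' := by simp
  add_mem' {a b} ha hb i := by rw [← add_assoc, hb, ha, add_assoc]
  neg_mem' {a} ha i := eq_add_neg_of_add_eq (by simpa using (ha (i + -a)).symm)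

lemma mem_rotStabilizer {σ : Equiv.Perm (ZMod q)} {a : ZMod q} :
    a ∈ rotStabilizer σ ↔ ∀ i, σ (i + a) = σ i + a := Iff.rfl

lemma conj_rotPerm_pow_eq_self_iff {σ : Equiv.Perm (ZMod q)} {j : ℕ} :
    rotPerm q ^ j * σ * (rotPerm q ^ j)⁻¹ = σ ↔ (j : ZMod q) ∈ rotStabilizer σ := by
  simp only [Equiv.ext_iff, conj_rotPerm_pow_apply, mem_rotStabilizer]
  refine ⟨fun h i => ?_, fun h i => ?_⟩
  · simpa using (h (i + j)).symm
  · simpa using (h (i - j)).symm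

lemma symOrder_eq_card_rotStabilizer [NeZero q] (σ : Equiv.Perm (ZMod q)) :
    symOrder q σ = Nat.card (rotStabilizer σ) := by
  rw [symOrder, Nat.card_eq_fintype_card, Fintype.card_subtype, Finset.card_filter,
    Finset.card_filter]
  simp_rw [conj_rotPerm_pow_eq_self_iff]
  exact sum_range_natCast (fun a => if a ∈ rotStabilizer σ then 1 else 0)

/- In the cyclic group `ZMod q` a subgroup of order `s` is the whole `s`-torsion, since the latter
has at most `s` elements. -/
lemma natCast_div_card_mem [NeZero q] (H : AddSubgroup (ZMod q)) :
    ((q / Nat.card H : ℕ) : ZMod q) ∈ H := by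
  set s := Nat.card H
  have hsq : s ∣ q := Nat.card_zmod q ▸ H.card_addSubgroup_dvd_card
  have hHK : ({a | a ∈ H} : Finset (ZMod q)) ⊆ ({a | s • a = 0} : Finset (ZMod q)) :=
    fun a ha => by
      rw [Finset.mem_filter] at ha ⊢
      exact ⟨Finset.mem_univ a,
        congrArg Subtype.val (card_nsmul_eq_zero' (x := (⟨a, ha.2⟩ : H)))⟩
  have hKH := Finset.eq_of_subset_of_card_le hHK <| by
    refine (IsAddCyclic.card_nsmul_eq_zero_le (α := ZMod q) (Nat.card_pos (α := H))).trans ?_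
    rw [Nat.card_eq_fintype_card, Fintype.card_subtype]
  have hmem : ((q / s : ℕ) : ZMod q) ∈ ({a | s • a = 0} : Finset (ZMod q)) := by
    simp only [Finset.mem_filter, Finset.mem_univ, true_and, nsmul_eq_mul]
    rw [← Nat.cast_mul, Nat.mul_div_cancel' hsq, ZMod.natCast_self]
  rw [← hKH, Finset.mem_filter] at hmem
  exact hmem.2

end Rotation

lemma IsQCycle.apply_ne_self {q : ℕ} (hq : 1 < q) {σ : Equiv.Perm (ZMod q)} (hσ : IsQCycle q σ)
    (i : ZMod q) : σ i ≠ i := fun h => by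
  have : Fact (1 < q) := ⟨hq⟩
  obtain ⟨n, hn⟩ := hσ i (i + 1)
  rw [Equiv.Perm.pow_apply_eq_self_of_apply_eq_self h n] at hn
  simp at hn

section Lift

variable {q : ℕ} [NeZero q] {x : ZMod q → ℝ}

lemma exists_eq_rep_add_mul (k : ℤ) : ∃ t : ℤ, k = rep q k + q * t := by
  obtain ⟨t, ht⟩ := (ZMod.intCast_eq_intCast_iff_dvd_sub (rep q k : ℤ) k q).1 (by simp)
  exact ⟨t, by linarith⟩

/-- The lift of the orbit to `ℤ`, normalized by `orbitLift q x (rep q i + q * t) = x i + t`. -/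
def orbitLift (q : ℕ) [NeZero q] (x : ZMod q → ℝ) (k : ℤ) : ℝ :=
  x k + ((k : ℝ) - rep q k) / q

lemma orbitLift_add_mul (k t : ℤ) : orbitLift q x (k + q * t) = orbitLift q x k + t := by
  have hq : (q : ℝ) ≠ 0 := Nat.cast_ne_zero.2 (NeZero.ne q)
  have hk : ((k + q * t : ℤ) : ZMod q) = k := by simp
  rw [orbitLift, orbitLift, hk]
  push_cast
  field_simp
  ring

lemma orbitLift_add_q (k : ℤ) : orbitLift q x (k + q) = orbitLift q x k + 1 := by
  simpa using orbitLift_add_mul (x := x) k 1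

lemma orbitLift_rep (i : ZMod q) : orbitLift q x (rep q i) = x i := by
  simp [orbitLift]

lemma orbitLift_rep_add_mul (i : ZMod q) (t : ℤ) :
    orbitLift q x (rep q i + q * t) = x i + t := by
  rw [orbitLift_add_mul, orbitLift_rep]

lemma exists_orbitLift_eq_add (k : ℤ) : ∃ t : ℤ, orbitLift q x k = x k + t := by
  obtain ⟨t, ht⟩ := exists_eq_rep_add_mul (q := q) k
  exact ⟨t, (congrArg _ ht).trans (orbitLift_rep_add_mul _ _)⟩

lemma exists_orbitLift_eq_add_of_cast_eq {a b : ℤ} (h : (a : ZMod q) = b) :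
    ∃ t : ℤ, orbitLift q x a = orbitLift q x b + t := by
  obtain ⟨t, ht⟩ := exists_orbitLift_eq_add (x := x) a
  obtain ⟨u, hu⟩ := exists_orbitLift_eq_add (x := x) b
  exact ⟨t - u, by rw [ht, hu, h]; push_cast; ring⟩

lemma fract_orbitLift (hx : ∀ i, x i ∈ Ico 0 1) (k : ℤ) :
    Int.fract (orbitLift q x k) = x k := by
  obtain ⟨t, ht⟩ := exists_orbitLift_eq_add (x := x) k
  rw [ht, Int.fract_add_intCast, Int.fract_eq_self.2 (hx k)]

lemma exists_orbitLift_eq {r : ℝ} {i : ZMod q} (h : Int.fract r = x i) :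
    ∃ k : ℤ, (k : ZMod q) = i ∧ orbitLift q x k = r :=
  ⟨rep q i + q * ⌊r⌋, by simp, by rw [orbitLift_rep_add_mul, ← h, Int.fract_add_floor]⟩

lemma abs_orbitLift_sub_div_le (hx : ∀ i, x i ∈ Icc 0 1) (k : ℤ) :
    |orbitLift q x k - k / q| ≤ 1 := by
  have hq : (0 : ℝ) < q := Nat.cast_pos.2 (Nat.pos_of_ne_zero (NeZero.ne q))
  have h1 : (rep q k : ℝ) / q ≤ 1 := (div_le_one hq).2 (by exact_mod_cast rep_le _)
  have h2 : 0 ≤ (rep q k : ℝ) / q := by positivity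
  have heq : orbitLift q x k - k / q = x k - rep q k / q := by
    unfold orbitLift
    ring
  rw [heq, abs_le]
  constructor <;> linarith [(hx k).1, (hx k).2]

lemma IsRealization.orbitLift_strictMono {σ : Equiv.Perm (ZMod q)} {F : ℝ → ℝ}
    (hx : IsRealization q σ F x) : StrictMono (orbitLift q x) := by
  refine strictMono_int_of_lt_succ fun k => ?_
  obtain ⟨t, ht⟩ := exists_eq_rep_add_mul (q := q) k
  rw [(congrArg _ ht).trans (orbitLift_rep_add_mul _ _)]
  by_cases hk : (k : ZMod q) = 0
  · have hk1 : k + 1 = rep q 1 + q * (t + 1) := by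
      rw [hk] at ht
      rw [ht, rep_one]
      simp [rep]
      ring
    rw [hk1, orbitLift_rep_add_mul, hk]
    push_cast
    linarith [(hx.1 0).2, (hx.1 1).1]
  · have hk1 : k + 1 = rep q (k + 1 : ZMod q) + q * t := by
      rw [rep_add_one hk]
      push_cast
      linarith
    rw [hk1, orbitLift_rep_add_mul]
    linarith [hx.2.1 (k : ZMod q) (k + 1) (by rw [rep_add_one hk]; omega)]

lemma exists_orbitLift_lt_lt (hx : ∀ i, x i ∈ Icc 0 1) {c : ℝ}
    (hc : ∀ k, orbitLift q x k ≠ c) :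
    ∃ p, orbitLift q x p < c ∧ c < orbitLift q x (p + 1) := by
  have hq : (0 : ℝ) < q := Nat.cast_pos.2 (Nat.pos_of_ne_zero (NeZero.ne q))
  have hbdd : ∃ b : ℤ, ∀ z : ℤ, orbitLift q x z < c → z ≤ b := by
    refine ⟨⌈q * (c + 1)⌉, fun z hz => Int.cast_le.1 ((le_of_lt ?_).trans (Int.le_ceil _))⟩
    have := (abs_le.1 (abs_orbitLift_sub_div_le hx z)).1
    have : (z : ℝ) / q < c + 1 := by linarith
    rwa [div_lt_iff₀ hq, mul_comm] at this
  have hne : ∃ z : ℤ, orbitLift q x z < c := by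
    refine ⟨q * (⌊c⌋ - 2), ?_⟩
    have := (abs_le.1 (abs_orbitLift_sub_div_le hx (q * (⌊c⌋ - 2)))).2
    push_cast at this
    rw [mul_div_cancel_left₀ _ hq.ne'] at this
    linarith [Int.floor_le c]
  obtain ⟨p, hp, hmax⟩ := Int.exists_greatest_of_bdd hbdd hne
  refine ⟨p, hp, lt_of_le_of_ne (not_lt.1 fun h => ?_) (hc _).symm⟩
  linarith [hmax _ h]

end Lift

lemma Function.Periodic.eq_zero_of_sum_range_eq_zero {M : Type*} [AddCommMonoid M]
    [PartialOrder M] [AddLeftMono M] {g : ℤ → M} {q : ℕ} (hq : 0 < q) (h : Periodic g q)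
    (hg : ∀ k, 0 ≤ g k) (hsum : ∑ n ∈ Finset.range q, g n = 0) (k : ℤ) : g k = 0 := by
  have hmod : g k = g (k % q) := by
    rw [Int.emod_def, mul_comm, ← smul_eq_mul, h.sub_zsmul_eq]
  have hlt := Int.emod_lt_of_pos k (Int.natCast_pos.2 hq)
  have hnonneg := Int.emod_nonneg k (Int.natCast_ne_zero.2 hq.ne')
  rw [hmod, ← Int.toNat_of_nonneg hnonneg]
  exact (Finset.sum_eq_zero_iff_of_nonneg fun (n : ℕ) _ => hg n).1 hsum _
    (Finset.mem_range.2 (by omega))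

lemma lift_succ_sub_eq_val {q : ℕ} [NeZero q] (hq : 1 < q) {σ : Equiv.Perm (ZMod q)}
    {Φ : ℤ → ℤ} (hmono : StrictMono Φ) (hper : ∀ k, Φ (k + q) = Φ k + q * desNum q σ)
    (hσ : ∀ k, (Φ k : ZMod q) = σ k) (k : ℤ) :
    Φ (k + 1) - Φ k = (σ (k + 1) - σ k).val := by
  have : Fact (1 < q) := ⟨hq⟩
  -- `g` is a nonnegative multiple of `q` (it exceeds `-q`) whose sum over a period vanishes.
  set g : ℤ → ℤ := fun k => Φ (k + 1) - Φ k - (σ (k + 1) - σ k).val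
  have hnonneg (k : ℤ) : 0 ≤ g k := by
    obtain ⟨c, hc⟩ : (q : ℤ) ∣ g k := by
      rw [← ZMod.intCast_zmod_eq_zero_iff_dvd]
      simp [g, hσ]
    have h1 : Φ k < Φ (k + 1) := hmono (lt_add_one k)
    have h2 : ((σ (k + 1) - σ k).val : ℤ) < q := by exact_mod_cast ZMod.val_lt _
    have h3 : -(q : ℤ) < q * c := by rw [← hc]; simp only [g]; omega
    have : -1 < c := by nlinarith
    rw [hc]
    exact mul_nonneg (by positivity) (by omega)
  have hperiodic : Periodic g q := fun k => by
    simp only [g, add_right_comm k q 1, hper]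
    push_cast
    simp
  have hsum : ∑ n ∈ Finset.range q, g n = 0 := by
    have htel : ∑ n ∈ Finset.range q, (Φ (n + 1) - Φ n) = q * desNum q σ := by
      have := Finset.sum_range_sub (fun n : ℕ => Φ n) q
      push_cast at this
      rw [this, ← zero_add (q : ℤ), hper, zero_add, add_sub_cancel_left]
    have hval : ∑ n ∈ Finset.range q, ((σ ((n : ℤ) + 1) - σ (n : ℤ)).val : ℤ)
        = q * desNum q σ := by
      simpa using (sum_range_natCast fun i => ((σ (i + 1) - σ i).val : ℤ)).trans
        (sum_val_sub_eq_mul_desNum σ)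
    simp only [g, Finset.sum_sub_distrib, htel, hval, sub_self]
  have hk := hperiodic.eq_zero_of_sum_range_eq_zero (by omega) hnonneg hsum k
  simp only [g] at hk
  omega

lemma eq_zero_of_apply_eq_mul {α : Type*} {f : α → ℝ} {φ : α → α} {c : ℝ} (hc : 1 < c)
    (hf : ∀ a, f (φ a) = c * f a) (hb : BddAbove (range fun a => |f a|)) (a : α) : f a = 0 := by
  by_contra h
  obtain ⟨C, hC⟩ := hb
  have hiter (n : ℕ) : |f (φ^[n] a)| = c ^ n * |f a| := by
    induction n with
    | zero => simp
    | succ n ih =>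
      rw [iterate_succ_apply', hf, abs_mul, ih, abs_of_pos (by linarith), pow_succ]
      ring
  obtain ⟨n, hn⟩ := pow_unbounded_of_one_lt (C / |f a|) hc
  rw [div_lt_iff₀ (abs_pos.2 h)] at hn
  linarith [hiter n ▸ hC (mem_range_self (φ^[n] a))]

lemma fract_fract_sub (a b : ℝ) : Int.fract (Int.fract a - b) = Int.fract (a - b) :=
  Int.fract_eq_fract.2 ⟨-⌊a⌋, by rw [Int.fract]; push_cast; ring⟩

lemma Function.Periodic.exists_lt_eq_div {α : Type*} {f : ℝ → α} {b : ℝ} {g : ℕ}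
    (h : Periodic f (g / b)) (hg : 0 < g) (m : ℤ) :
    ∃ n : ℕ, n < g ∧ f (m / b) = f (n / b) := by
  have hmod := Int.emod_nonneg m (Int.natCast_ne_zero.2 hg.ne')
  refine ⟨(m % g).toNat, by have := Int.emod_lt_of_pos m (Int.natCast_pos.2 hg); omega, ?_⟩
  have hm : (m : ℝ) / b = ((m % g).toNat : ℝ) / b + (m / g : ℤ) * (g / b) := by
    have hsplit : (m : ℝ) = (m % g : ℤ) + g * (m / g : ℤ) := by
      exact_mod_cast (Int.emod_add_mul_ediv m g).symm
    rw [show (((m % g).toNat : ℕ) : ℝ) = ((m % g : ℤ) : ℝ) by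
      exact_mod_cast Int.toNat_of_nonneg hmod, hsplit]
    ring
  rw [hm, h.int_mul]

lemma exists_fract_fract_sub_eq {ι : Type*} {x : ι → ℝ} (hx : ∀ i, x i ∈ Ico 0 1)
    {a : ℝ} (h : Periodic (fun c => (fun t => Int.fract (t - c)) '' range x) a) (c : ℝ) (i : ι) :
    ∃ i', Int.fract (Int.fract (x i - c) - a) = Int.fract (x i' - c) := by
  have hmem : Int.fract (x i - a) ∈ range x := by
    have h0 : (fun t => Int.fract (t - 0)) '' range x = range x := by
      rw [← range_comp]
      exact congrArg range (funext fun i => by simpa using hx i)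
    have h1 := h 0
    simp only [zero_add] at h1
    rw [← h0, ← h1]
    exact mem_image_of_mem _ (mem_range_self i)
  obtain ⟨i', hi'⟩ := hmem
  exact ⟨i', by rw [hi', fract_fract_sub, fract_fract_sub, sub_right_comm]⟩

section RotatedCopies

variable {q : ℕ} [NeZero q] {x y : ZMod q → ℝ}

lemma range_eq_image_fract_sub (hy : ∀ i, y i ∈ Ico 0 1) {J : ℤ} {c : ℝ}
    (h : ∀ k, orbitLift q y (k + J) = orbitLift q x k - c) :
    range y = (fun t => Int.fract (t - c)) '' range x := by
  ext u
  constructor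
  · rintro ⟨i, rfl⟩
    obtain ⟨t, ht⟩ := exists_orbitLift_eq_add (x := x) (rep q i - J)
    refine ⟨_, mem_range_self ((rep q i - J : ℤ) : ZMod q), ?_⟩
    have hi := h (rep q i - J)
    rw [sub_add_cancel, orbitLift_rep, ht] at hi
    rw [← Int.fract_eq_self.2 (hy i), hi]
    exact Int.fract_eq_fract.2 ⟨-t, by push_cast; ring⟩
  · rintro ⟨_, ⟨i, rfl⟩, rfl⟩
    refine ⟨(rep q i + J : ℤ), ?_⟩
    have hi := h (rep q i)
    rw [orbitLift_rep] at hi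
    rw [← fract_orbitLift hy, hi]

lemma periodic_image_fract_sub (hx : ∀ i, x i ∈ Ico 0 1) {J : ℤ} {a : ℝ}
    (h : ∀ k, orbitLift q x (k + J) = orbitLift q x k + a) :
    Periodic (fun c => (fun t => Int.fract (t - c)) '' range x) a := fun c => by
  have hinv : range x = (fun t => Int.fract (t - a)) '' range x :=
    range_eq_image_fract_sub hx (J := -J) fun k => by
      have := h (k + -J)
      rw [neg_add_cancel_right] at this
      linarith
  dsimp only
  conv_rhs => rw [hinv, image_image]
  simp only [fract_fract_sub, sub_sub, add_comm a]

end RotatedCopies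

namespace MkRealization

variable {q d : ℕ} [NeZero q] {σ τ : Equiv.Perm (ZMod q)} {x y : ZMod q → ℝ}

lemma mem_Ico (hx : MkRealization q d σ x) (i : ZMod q) : x i ∈ Ico 0 1 :=
  Ioo_subset_Ico_self (hx.1 i)

lemma mem_Icc (hx : MkRealization q d σ x) (i : ZMod q) : x i ∈ Icc 0 1 :=
  Ioo_subset_Icc_self (hx.1 i)

lemma exists_liftPerm (hx : MkRealization q d σ x) : ∃ Φ : ℤ → ℤ,
    ∀ k, (Φ k : ZMod q) = σ k ∧ orbitLift q x (Φ k) = d * orbitLift q x k := by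
  have hfract (k : ℤ) : Int.fract (d * orbitLift q x k) = x (σ k) := by
    obtain ⟨t, ht⟩ := exists_orbitLift_eq_add (x := x) k
    obtain ⟨m, hm : (d : ℝ) * x k = x (σ k) + m⟩ := hx.2.2 k
    rw [ht, mul_add, hm,
      show x (σ k) + m + d * t = x (σ k) + ((m + d * t : ℤ) : ℝ) by push_cast; ring,
      Int.fract_add_intCast, Int.fract_eq_self.2 (hx.mem_Ico (σ k))]
  choose Φ hΦ using fun k => exists_orbitLift_eq (hfract k)
  exact ⟨Φ, hΦ⟩

section LiftPerm

variable {Φ : ℤ → ℤ}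

lemma liftPerm_strictMono (hx : MkRealization q d σ x) (hd : 0 < d)
    (hΦ : ∀ k, orbitLift q x (Φ k) = d * orbitLift q x k) : StrictMono Φ := fun a b hab => by
  have hX := IsRealization.orbitLift_strictMono hx
  refine hX.lt_iff_lt.1 ?_
  rw [hΦ, hΦ]
  exact mul_lt_mul_of_pos_left (hX hab) (by exact_mod_cast hd)

lemma liftPerm_add_q (hx : MkRealization q d σ x)
    (hΦ : ∀ k, orbitLift q x (Φ k) = d * orbitLift q x k) (k : ℤ) :
    Φ (k + q) = Φ k + q * d := by
  refine (IsRealization.orbitLift_strictMono hx).injective ?_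
  rw [hΦ, orbitLift_add_q, orbitLift_add_mul, hΦ]
  push_cast
  ring

end LiftPerm

lemma exists_liftPerm_conj_eq (hq : 1 < q) (hd : 0 < d) (hx : MkRealization q d σ x)
    (hy : MkRealization q d τ y) (hdes : desNum q σ = d) {J : ℤ}
    (hJ : ∀ i, τ i = σ (i - J) + J) {Φ Ψ : ℤ → ℤ}
    (hΦ : ∀ k, (Φ k : ZMod q) = σ k ∧ orbitLift q x (Φ k) = d * orbitLift q x k)
    (hΨ : ∀ k, (Ψ k : ZMod q) = τ k ∧ orbitLift q y (Ψ k) = d * orbitLift q y k) :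
    ∃ m : ℤ, ∀ k, Φ k + J = Ψ (k + J) + q * m := by
  have hdesτ : desNum q τ = d := (desNum_of_apply_eq hJ).trans hdes
  have hincΦ := lift_succ_sub_eq_val hq (hx.liftPerm_strictMono hd fun k => (hΦ k).2)
    (fun k => hdes ▸ hx.liftPerm_add_q (fun k => (hΦ k).2) k) fun k => (hΦ k).1
  have hincΨ := lift_succ_sub_eq_val hq (hy.liftPerm_strictMono hd fun k => (hΨ k).2)
    (fun k => hdesτ ▸ hy.liftPerm_add_q (fun k => (hΨ k).2) k) fun k => (hΨ k).1
  have hper : Periodic (fun k => Φ k + J - Ψ (k + J)) 1 := fun k => by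
    have h := hincΨ (k + J)
    simp only [hJ, Int.cast_add, add_sub_cancel_right, add_right_comm _ (J : ZMod q) 1,
      add_sub_add_right_eq_sub] at h
    simp only [add_right_comm k 1 J]
    linarith [hincΦ k]
  obtain ⟨m, hm⟩ : (q : ℤ) ∣ Φ 0 + J - Ψ (0 + J) := by
    rw [← ZMod.intCast_zmod_eq_zero_iff_dvd]
    push_cast
    simp [(hΦ 0).1, (hΨ _).1, hJ]
  refine ⟨m, fun k => ?_⟩
  have := hper.int_mul_eq k
  simp only [mul_one, Int.cast_id] at this
  linarith

theorem exists_orbitLift_conj_eq (hq : 1 < q) (hd : 2 ≤ d) (hx : MkRealization q d σ x)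
    (hy : MkRealization q d τ y) (hdes : desNum q σ = d) {J : ℤ}
    (hJ : ∀ i, τ i = σ (i - J) + J) :
    ∃ m : ℤ, ∀ k, orbitLift q y (k + J) = orbitLift q x k - m / (d - 1) := by
  have hd1 : (1 : ℝ) < d := by exact_mod_cast hd
  have hd0 : (d : ℝ) - 1 ≠ 0 := by linarith
  obtain ⟨Φ, hΦ⟩ := hx.exists_liftPerm
  obtain ⟨Ψ, hΨ⟩ := hy.exists_liftPerm
  obtain ⟨m, hm⟩ := exists_liftPerm_conj_eq hq (by omega) hx hy hdes hJ hΦ hΨ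
  set B : ℤ → ℝ := fun k => orbitLift q y (k + J) - orbitLift q x k + m / (d - 1)
  have hBΦ (k : ℤ) : B (Φ k) = d * B k := by
    simp only [B, hm, orbitLift_add_mul, (hΨ _).2, (hΦ _).2]
    field_simp
    ring
  have hBbdd : BddAbove (range fun k => |B k|) := by
    refine ⟨2 + |(J : ℝ) / q + m / (d - 1)|, forall_mem_range.2 fun k => ?_⟩
    have hy' := abs_le.1 (abs_orbitLift_sub_div_le hy.mem_Icc (k + J))
    have hx' := abs_le.1 (abs_orbitLift_sub_div_le hx.mem_Icc k)
    have hc := abs_le.1 (le_refl |(J : ℝ) / q + m / (d - 1)|)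
    have heq : B k = (orbitLift q y (k + J) - (k + J : ℤ) / q) - (orbitLift q x k - k / q)
        + (J / q + m / (d - 1)) := by
      simp only [B]
      push_cast
      ring
    rw [heq, abs_le]
    constructor <;> linarith
  refine ⟨m, fun k => ?_⟩
  linarith [eq_zero_of_apply_eq_mul hd1 hBΦ hBbdd k]

theorem exists_orbitLift_add_inv_symOrder (hq : 1 < q) (hd : 2 ≤ d)
    (hx : MkRealization q d σ x) (hdes : desNum q σ = d) :
    symOrder q σ * ((d - 1) / symOrder q σ) = d - 1 ∧
      ∃ J : ℤ, ∀ k, orbitLift q x (k + J) = orbitLift q x k + 1 / symOrder q σ := by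
  have hd0 : (d : ℝ) - 1 ≠ 0 := by
    have : (2 : ℝ) ≤ d := by exact_mod_cast hd
    linarith
  have hcard := symOrder_eq_card_rotStabilizer σ
  set s := symOrder q σ
  have hsq : s ∣ q := by
    have := (rotStabilizer σ).card_addSubgroup_dvd_card
    rwa [Nat.card_zmod, ← hcard] at this
  have hmem := mem_rotStabilizer.1 (hcard ▸ natCast_div_card_mem (rotStabilizer σ))
  -- The relabelling by `q / s` is a rotation by `-w / (d - 1)`; `s` of them make a full turn.
  obtain ⟨w, hw⟩ := exists_orbitLift_conj_eq hq hd hx hx hdes (J := (q / s : ℕ)) fun i => by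
    rw [Int.cast_natCast, ← hmem, sub_add_cancel]
  have hiter (n : ℕ) (k : ℤ) :
      orbitLift q x (k + n * (q / s : ℕ)) = orbitLift q x k - n * (w / (d - 1)) := by
    induction n with
    | zero => simp
    | succ n ih =>
      rw [Nat.cast_succ, add_one_mul, ← add_assoc, hw, ih]
      push_cast
      ring
  have hsw : (s : ℝ) * (-w) = d - 1 := by
    have h := hiter s 0
    rw [← Nat.cast_mul, Nat.mul_div_cancel' hsq, orbitLift_add_q] at h
    field_simp at h
    linarith
  have hswZ : (s : ℤ) * (-w) = d - 1 := by exact_mod_cast hsw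
  have hw0 : 0 ≤ -w := by
    by_contra h
    nlinarith [(Nat.cast_nonneg s : (0 : ℤ) ≤ s)]
  have hs0 : (s : ℝ) ≠ 0 := by
    rintro h
    rw [h, zero_mul] at hsw
    exact hd0 hsw.symm
  refine ⟨Nat.mul_div_cancel' ⟨(-w).toNat, ?_⟩, (q / s : ℕ), fun k => ?_⟩
  · zify [(by omega : 1 ≤ d)]
    rw [Int.toNat_of_nonneg hw0, hswZ]
  · rw [hw]
    field_simp
    linarith

lemma orbitLift_ne (hx : MkRealization q d σ x) (hfix : ∀ i, σ i ≠ i) {c : ℝ} {n : ℤ}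
    (hc : d * c = c + n) (k : ℤ) : orbitLift q x k ≠ c := fun h => by
  obtain ⟨Φ, hΦ⟩ := hx.exists_liftPerm
  have hΦk : Φ k = k + q * n := (IsRealization.orbitLift_strictMono hx).injective <| by
    rw [(hΦ k).2, orbitLift_add_mul, h, hc]
  exact hfix k (by simpa [hΦk] using (hΦ k).1.symm)

lemma orbitLift_recenter (p : ℤ) (c : ℝ) (k : ℤ) :
    orbitLift q (fun i => orbitLift q x (p + rep q i) - c) k = orbitLift q x (p + k) - c := by
  obtain ⟨t, ht⟩ := exists_eq_rep_add_mul (q := q) k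
  rw [(congrArg _ ht).trans (orbitLift_rep_add_mul _ _)]
  conv_rhs => rw [ht, ← add_assoc, orbitLift_add_mul]
  ring

lemma recenter (hx : MkRealization q d σ x) {c : ℝ} {n : ℤ} (hc : d * c = c + n) {p : ℤ}
    (hp : orbitLift q x p < c) (hp1 : c < orbitLift q x (p + 1))
    (hτ : ∀ i, τ i = σ (i + p) - p) :
    MkRealization q d τ (fun i => orbitLift q x (p + rep q i) - c) := by
  have hX := IsRealization.orbitLift_strictMono hx
  refine ⟨fun i => ⟨?_, ?_⟩, fun i j hij => ?_, fun i => ?_⟩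
  · have := hX.monotone (by have := one_le_rep i; omega : p + 1 ≤ p + rep q i)
    dsimp only
    linarith
  · have := hX.monotone (by have := rep_le i; omega : p + rep q i ≤ p + q)
    rw [orbitLift_add_q] at this
    dsimp only
    linarith
  · have := hX (by omega : p + rep q i < p + rep q j)
    dsimp only
    linarith
  · obtain ⟨Φ, hΦ⟩ := hx.exists_liftPerm
    obtain ⟨t, ht⟩ := exists_orbitLift_eq_add_of_cast_eq (x := x)
      (a := Φ (p + rep q i)) (b := p + rep q (τ i)) (by simp [(hΦ _).1, hτ, add_comm])
    refine ⟨t - n, ?_⟩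
    simp only
    rw [mul_sub, ← (hΦ _).2, ht, hc]
    push_cast
    ring

theorem exists_conj_realization_eq_image (hd : 2 ≤ d) (hx : MkRealization q d σ x)
    (hfix : ∀ i, σ i ≠ i) (n : ℕ) : ∃ j : ℕ, ∃ y : ZMod q → ℝ,
      MkRealization q d (rotPerm q ^ j * σ * (rotPerm q ^ j)⁻¹) y ∧
      range y = (fun t => Int.fract (t - (n : ℝ) / ((d : ℝ) - 1))) '' range x := by
  set c := (n : ℝ) / ((d : ℝ) - 1)
  have hc : d * c = c + (n : ℤ) := by
    have : (d : ℝ) - 1 ≠ 0 := by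
      have : (2 : ℝ) ≤ d := by exact_mod_cast hd
      linarith
    simp only [c]
    field_simp
    push_cast
    ring
  obtain ⟨p, hp, hp1⟩ := exists_orbitLift_lt_lt hx.mem_Icc (hx.orbitLift_ne hfix hc)
  have hy := hx.recenter hc hp hp1 (τ := rotPerm q ^ ((-p : ℤ) : ZMod q).val * σ *
    (rotPerm q ^ ((-p : ℤ) : ZMod q).val)⁻¹) fun i => by
      rw [conj_rotPerm_pow_apply, ZMod.natCast_zmod_val]
      push_cast
      ring_nf
  refine ⟨_, _, hy, range_eq_image_fract_sub hy.mem_Ico (J := -p) fun k => ?_⟩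
  rw [orbitLift_recenter, add_left_comm, add_neg_cancel, add_zero]

end MkRealization

theorem rotated_copies_form_all_realizations_general (q d s : ℕ) [NeZero q] (hq : 2 ≤ q)
    (σ : Equiv.Perm (ZMod q)) (hσ : IsQCycle q σ) (hd : desNum q σ = d)
    (hd2 : 2 ≤ d) (hs : symOrder q σ = s)
    (x : ZMod q → ℝ) (hx : MkRealization q d σ x) :
    (∀ n : ℕ, n < (d - 1) / s → ∃ j : ℕ, ∃ y : ZMod q → ℝ,
        MkRealization q d (rotPerm q ^ j * σ * (rotPerm q ^ j)⁻¹) y ∧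
        Set.range y = (fun t => Int.fract (t - (n : ℝ) / ((d : ℝ) - 1))) '' Set.range x) ∧
    (∀ (j : ℕ) (y : ZMod q → ℝ),
        MkRealization q d (rotPerm q ^ j * σ * (rotPerm q ^ j)⁻¹) y →
        ∃ n : ℕ, n < (d - 1) / s ∧
          Set.range y = (fun t => Int.fract (t - (n : ℝ) / ((d : ℝ) - 1))) '' Set.range x) ∧
    (∀ n : ℕ, n < (d - 1) / s → ∀ i : ZMod q, ∃ i' : ZMod q,
        Int.fract (Int.fract (x i - (n : ℝ) / ((d : ℝ) - 1)) - 1 / (s : ℝ))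
          = Int.fract (x i' - (n : ℝ) / ((d : ℝ) - 1))) := by
  obtain ⟨hsg, J, hJ⟩ := hx.exists_orbitLift_add_inv_symOrder hq hd2 hd
  rw [hs] at hsg hJ
  have hper := periodic_image_fract_sub hx.mem_Ico hJ
  have hg : 0 < (d - 1) / s := Nat.pos_of_ne_zero fun h => by rw [h, mul_zero] at hsg; omega
  have hper' : Periodic (fun c => (fun t => Int.fract (t - c)) '' range x)
      (((d - 1) / s : ℕ) / ((d : ℝ) - 1)) := by
    convert hper using 1
    have hsg' : (s : ℝ) * ((d - 1) / s : ℕ) = d - 1 := by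
      rw [← Nat.cast_mul, hsg, Nat.cast_sub (by omega), Nat.cast_one]
    have hs0 : (s : ℝ) ≠ 0 := Nat.cast_ne_zero.2 (by rintro rfl; simp at hg)
    have hd1 : (d : ℝ) - 1 ≠ 0 := by rw [← hsg']; exact mul_ne_zero hs0 (by positivity)
    rw [div_eq_div_iff hd1 hs0]
    linarith
  refine ⟨fun n _ => hx.exists_conj_realization_eq_image hd2 (hσ.apply_ne_self hq) n,
    fun j y hy => ?_, fun n _ i => exists_fract_fract_sub_eq hx.mem_Ico hper _ i⟩
  obtain ⟨m, hm⟩ := MkRealization.exists_orbitLift_conj_eq hq hd2 hx hy hd (J := j) fun i => by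
    rw [conj_rotPerm_pow_apply, Int.cast_natCast]
  obtain ⟨n, hn, hfn⟩ := hper'.exists_lt_eq_div hg m
  exact ⟨n, hn, (range_eq_image_fract_sub hy.mem_Ico hm).trans hfn⟩

/-- Let `τ = [σ]` with `des τ = d ≥ 2`, `sym τ = s`, where the representative `σ`
has signature ending in `1` (`a_q = 1`), and let `𝒪` (given by `x`) be the unique
realization of `σ` under `m_d`. Then the rotated copies `𝒪 - j/(d-1) (mod ℤ)` for
`0 ≤ j < (d-1)/s` form all the realizations of `τ` under `m_d`, and each of these
orbits is invariant under the rigid rotation `t ↦ t - 1/s (mod ℤ)`. -/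
theorem rotated_copies_form_all_realizations (q d s : ℕ) [NeZero q] (hq : 2 ≤ q)
    (σ : Equiv.Perm (ZMod q)) (hσ : IsQCycle q σ) (hd : desNum q σ = d)
    (hd2 : 2 ≤ d) (hs : symOrder q σ = s) (hsig : transMatrix q σ 0 0 = 1)
    (x : ZMod q → ℝ) (hx : MkRealization q d σ x) :
    (∀ n : ℕ, n < (d - 1) / s → ∃ j : ℕ, ∃ y : ZMod q → ℝ,
        MkRealization q d (rotPerm q ^ j * σ * (rotPerm q ^ j)⁻¹) y ∧
        Set.range y = (fun t => Int.fract (t - (n : ℝ) / ((d : ℝ) - 1))) '' Set.range x) ∧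
    (∀ (j : ℕ) (y : ZMod q → ℝ),
        MkRealization q d (rotPerm q ^ j * σ * (rotPerm q ^ j)⁻¹) y →
        ∃ n : ℕ, n < (d - 1) / s ∧
          Set.range y = (fun t => Int.fract (t - (n : ℝ) / ((d : ℝ) - 1))) '' Set.range x) ∧
    (∀ n : ℕ, n < (d - 1) / s → ∀ i : ZMod q, ∃ i' : ZMod q,
        Int.fract (Int.fract (x i - (n : ℝ) / ((d : ℝ) - 1)) - 1 / (s : ℝ))
          = Int.fract (x i' - (n : ℝ) / ((d : ℝ) - 1))) :=
  rotated_copies_form_all_realizations_general q d s hq σ hσ hd hd2 hs x hx
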